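/- For all t ≥ 0, √π · e^{t²} · erfc(t) ≤ 2/(t + √(t² + 4/π)). -/

import Mathlib

open Real MeasureTheory

/-- The complementary error function. -/
noncomputable def erfc (t : ℝ) : ℝ :=
  (2 / Real.sqrt π) * ∫ s in Set.Ioi t, Real.exp (-s ^ 2)

namespace ErfcAux

open Set Filter

noncomputable def R (t : ℝ) : ℝ := ∫ s in Set.Ioi t, Real.exp (-s ^ 2)
noncomputable def uu (t : ℝ) : ℝ := Real.sqrt (t ^ 2 + 4 / π)
noncomputable def yy (t : ℝ) : ℝ := Real.exp (-t ^ 2) / (t + uu t)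
noncomputable def D (t : ℝ) : ℝ := yy t - R t
noncomputable def t₀ : ℝ := (4 / π - 1) / Real.sqrt (2 - 4 / π)

lemma c_gt_one : 1 < 4 / π := by
  rw [lt_div_iff₀ pi_pos]
  nlinarith [Real.pi_lt_d2]

lemma c_lt : 4 / π < 4 / 3 :=
  div_lt_div_of_pos_left (by norm_num) (by norm_num) Real.pi_gt_three

lemma c_pos : 0 < 4 / π := by positivity

lemma two_sub_c_pos : 0 < 2 - 4 / π := by linarith [c_lt]

lemma t₀_pos : 0 < t₀ :=
  div_pos (by linarith [c_gt_one]) (Real.sqrt_pos.2 two_sub_c_pos)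

lemma arg_pos (t : ℝ) : 0 < t ^ 2 + 4 / π := by positivity

lemma uu_pos (t : ℝ) : 0 < uu t := Real.sqrt_pos.2 (arg_pos t)

lemma uu_sq (t : ℝ) : uu t ^ 2 = t ^ 2 + 4 / π := Real.sq_sqrt (arg_pos t).le

lemma abs_lt_uu (t : ℝ) : |t| < uu t := by
  rw [← Real.sqrt_sq_eq_abs]
  exact Real.sqrt_lt_sqrt (sq_nonneg t) (by linarith [c_pos])

lemma v_pos (t : ℝ) : 0 < t + uu t := by
  have := abs_lt_uu t; have := neg_abs_le t; linarith

lemma integrable_f : Integrable (fun s : ℝ => Real.exp (-s ^ 2)) := by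
  have := integrable_exp_neg_mul_sq (b := 1) one_pos
  simpa using this

lemma R_eq (t : ℝ) : R t = R 0 - ∫ s in (0:ℝ)..t, Real.exp (-s ^ 2) := by
  rcases le_total 0 t with h | h
  · rw [intervalIntegral.integral_of_le h]
    have hsplit : (∫ s in Set.Ioi (0:ℝ), Real.exp (-s ^ 2)) =
        (∫ s in Set.Ioc (0:ℝ) t, Real.exp (-s ^ 2)) + ∫ s in Set.Ioi t, Real.exp (-s ^ 2) := by
      rw [← setIntegral_union (Set.Ioc_disjoint_Ioi le_rfl) measurableSet_Ioi
        integrable_f.integrableOn integrable_f.integrableOn, Set.Ioc_union_Ioi_eq_Ioi h]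
    simp only [R]
    rw [hsplit]; ring
  · rw [intervalIntegral.integral_of_ge h]
    have hsplit : (∫ s in Set.Ioi t, Real.exp (-s ^ 2)) =
        (∫ s in Set.Ioc t 0, Real.exp (-s ^ 2)) + ∫ s in Set.Ioi (0:ℝ), Real.exp (-s ^ 2) := by
      rw [← setIntegral_union (Set.Ioc_disjoint_Ioi le_rfl) measurableSet_Ioi
        integrable_f.integrableOn integrable_f.integrableOn, Set.Ioc_union_Ioi_eq_Ioi h]
    simp only [R]
    rw [hsplit]; ring

lemma hasDerivAt_R (t : ℝ) : HasDerivAt R (-Real.exp (-t ^ 2)) t := by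
  have h : HasDerivAt (fun x => ∫ s in (0:ℝ)..x, Real.exp (-s ^ 2)) (Real.exp (-t ^ 2)) t := by
    apply intervalIntegral.integral_hasDerivAt_right
    · exact integrable_f.intervalIntegrable
    · exact (Continuous.stronglyMeasurableAtFilter (by fun_prop) _ _)
    · exact Continuous.continuousAt (by fun_prop)
  have h2 := (h.const_sub (R 0))
  have : R = fun x => R 0 - ∫ s in (0:ℝ)..x, Real.exp (-s ^ 2) := funext R_eq
  rw [this]
  simpa using h2

lemma hasDerivAt_uu (t : ℝ) : HasDerivAt uu (t / uu t) t := by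
  have h1 : HasDerivAt (fun x : ℝ => x ^ 2 + 4 / π) (2 * t) t := by
    simpa using (hasDerivAt_pow 2 t).add_const (4 / π)
  have h2 := (Real.hasDerivAt_sqrt (arg_pos t).ne').comp t h1
  refine h2.congr_deriv ?_
  symm
  have h0 := (uu_pos t).ne'
  simp only [uu] at *
  field_simp

lemma hasDerivAt_exp_neg_sq (t : ℝ) :
    HasDerivAt (fun x : ℝ => Real.exp (-x ^ 2)) (-2 * t * Real.exp (-t ^ 2)) t := by
  have h1 : HasDerivAt (fun x : ℝ => -x ^ 2) (-(2 * t)) t := by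
    simpa using (hasDerivAt_pow 2 t).fun_neg
  have := h1.exp
  convert this using 1
  ring

lemma hasDerivAt_yy (t : ℝ) :
    HasDerivAt yy (((-2 * t * Real.exp (-t ^ 2)) * (t + uu t)
      - Real.exp (-t ^ 2) * (1 + t / uu t)) / (t + uu t) ^ 2) t :=
  (hasDerivAt_exp_neg_sq t).div ((hasDerivAt_id t).add (hasDerivAt_uu t)) (v_pos t).ne'

lemma hasDerivAt_D (t : ℝ) :
    HasDerivAt D (Real.exp (-t ^ 2) * ((4 / π - 1) * uu t - t) / (uu t * (t + uu t) ^ 2)) t := by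
  have h := (hasDerivAt_yy t).sub (hasDerivAt_R t)
  refine h.congr_deriv ?_
  symm
  have hu := uu_sq t
  have hu0 := (uu_pos t).ne'
  have hv0 := (v_pos t).ne'
  have hu' : π * uu t ^ 2 = π * t ^ 2 + 4 := by
    rw [hu]; field_simp
  field_simp
  linear_combination (-uu t) * hu'

lemma num_nonneg {t : ℝ} (h0 : 0 ≤ t) (h1 : t ≤ t₀) : 0 ≤ (4 / π - 1) * uu t - t := by
  have hu := uu_sq t
  have hup := uu_pos t
  have hc1 := c_gt_one
  have h2c := two_sub_c_pos
  have hs : Real.sqrt (2 - 4 / π) ^ 2 = 2 - 4 / π := Real.sq_sqrt h2c.le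
  have hsp : 0 < Real.sqrt (2 - 4 / π) := Real.sqrt_pos.2 h2c
  have h3 : t * Real.sqrt (2 - 4 / π) ≤ 4 / π - 1 := by
    rw [t₀, le_div_iff₀ hsp] at h1; exact h1
  have h4 : t ^ 2 * (2 - 4 / π) ≤ (4 / π - 1) ^ 2 := by
    nlinarith [mul_nonneg h0 hsp.le]
  have hA : 0 < (4 / π - 1) * uu t := mul_pos (by linarith) hup
  have hAt : 0 < (4 / π - 1) * uu t + t := by linarith
  have hAsq : ((4 / π - 1) * uu t) ^ 2 = (4 / π - 1) ^ 2 * (t ^ 2 + 4 / π) := by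
    rw [mul_pow, hu]
  nlinarith [hAsq, h4, c_pos, hA, hAt, h2c]

lemma num_nonpos {t : ℝ} (h1 : t₀ ≤ t) : (4 / π - 1) * uu t - t ≤ 0 := by
  have hu := uu_sq t
  have hup := uu_pos t
  have hc1 := c_gt_one
  have h2c := two_sub_c_pos
  have h0 : 0 ≤ t := (t₀_pos.le).trans h1
  have hs : Real.sqrt (2 - 4 / π) ^ 2 = 2 - 4 / π := Real.sq_sqrt h2c.le
  have hsp : 0 < Real.sqrt (2 - 4 / π) := Real.sqrt_pos.2 h2c
  have h3 : 4 / π - 1 ≤ t * Real.sqrt (2 - 4 / π) := by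
    rw [t₀, div_le_iff₀ hsp] at h1; linarith
  have h4 : (4 / π - 1) ^ 2 ≤ t ^ 2 * (2 - 4 / π) := by
    nlinarith [mul_nonneg h0 hsp.le]
  have hA : 0 < (4 / π - 1) * uu t := mul_pos (by linarith) hup
  have hAt : 0 < (4 / π - 1) * uu t + t := by linarith
  have hAsq : ((4 / π - 1) * uu t) ^ 2 = (4 / π - 1) ^ 2 * (t ^ 2 + 4 / π) := by
    rw [mul_pow, hu]
  nlinarith [hAsq, h4, c_pos, hA, hAt, h2c]

lemma R_zero : R 0 = Real.sqrt π / 2 := by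
  have h := integral_gaussian_Ioi 1
  simp only [neg_mul, one_mul, div_one] at h
  simpa [R] using h

lemma yy_zero : yy 0 = Real.sqrt π / 2 := by
  have hπ : (0:ℝ) < Real.sqrt π := Real.sqrt_pos.2 pi_pos
  have h4 : (4:ℝ) / π = (2 / Real.sqrt π) ^ 2 := by
    rw [div_pow, Real.sq_sqrt pi_pos.le]; norm_num
  simp only [yy, uu]
  rw [show (0:ℝ)^2 + 4/π = (2 / Real.sqrt π)^2 by rw [← h4]; ring,
    Real.sqrt_sq (by positivity)]
  rw [show Real.exp (-(0:ℝ)^2) = 1 by norm_num, zero_add, one_div_div]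

lemma D_zero : D 0 = 0 := by
  simp [D, yy_zero, R_zero]

lemma R_nonneg (t : ℝ) : 0 ≤ R t :=
  setIntegral_nonneg measurableSet_Ioi fun s _ => (Real.exp_nonneg _)

lemma tendsto_R_zero : Tendsto R atTop (nhds 0) := by
  have hexp : Tendsto (fun t : ℝ => Real.exp (-t)) atTop (nhds 0) :=
    Real.tendsto_exp_neg_atTop_nhds_zero
  apply tendsto_of_tendsto_of_tendsto_of_le_of_le' tendsto_const_nhds hexp
  · exact Eventually.of_forall fun t => R_nonneg t
  · filter_upwards [eventually_ge_atTop (1:ℝ)] with t ht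
    have hint : IntegrableOn (fun s : ℝ => Real.exp (-s)) (Set.Ioi t) := by
      have := exp_neg_integrableOn_Ioi t (b := 1) one_pos
      simpa using this
    have h1 : R t ≤ ∫ s in Set.Ioi t, Real.exp (-s) := by
      apply setIntegral_mono_on integrable_f.integrableOn hint measurableSet_Ioi
      intro s hs
      have hs1 : (1:ℝ) ≤ s := ht.trans (le_of_lt hs)
      exact Real.exp_le_exp.2 (by nlinarith)
    calc R t ≤ ∫ s in Set.Ioi t, Real.exp (-s) := h1
      _ = Real.exp (-t) := integral_exp_neg_Ioi t

lemma tendsto_yy_zero : Tendsto yy atTop (nhds 0) := by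
  have h1 : Tendsto (fun t : ℝ => t ^ 2) atTop atTop := tendsto_pow_atTop two_ne_zero
  have h2 : Tendsto (fun t : ℝ => Real.exp (-t ^ 2)) atTop (nhds 0) :=
    Real.tendsto_exp_atBot.comp (tendsto_neg_atTop_atBot.comp h1)
  have h3 : Tendsto (fun t : ℝ => Real.exp (-t ^ 2) * (Real.sqrt (4 / π))⁻¹) atTop (nhds 0) := by
    simpa using h2.mul_const (Real.sqrt (4 / π))⁻¹
  apply tendsto_of_tendsto_of_tendsto_of_le_of_le' tendsto_const_nhds h3
  · exact Eventually.of_forall fun t => le_of_lt (div_pos (Real.exp_pos _) (v_pos t))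
  · filter_upwards [eventually_ge_atTop (0:ℝ)] with t ht
    have hv : Real.sqrt (4 / π) ≤ t + uu t := by
      have : Real.sqrt (4 / π) ≤ uu t := by
        apply Real.sqrt_le_sqrt; nlinarith [sq_nonneg t]
      linarith
    have hsp : 0 < Real.sqrt (4 / π) := Real.sqrt_pos.2 c_pos
    rw [div_eq_mul_inv]
    exact mul_le_mul_of_nonneg_left
      (by apply inv_anti₀ hsp hv) (Real.exp_nonneg _)

lemma tendsto_D_zero : Tendsto D atTop (nhds 0) := by
  have h := tendsto_yy_zero.sub tendsto_R_zero
  rw [sub_zero] at h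
  exact h

lemma D_nonneg {t : ℝ} (ht : 0 ≤ t) : 0 ≤ D t := by
  have hdiff : ∀ x : ℝ, DifferentiableAt ℝ D x := fun x => (hasDerivAt_D x).differentiableAt
  rcases le_total t t₀ with h | h
  · have mono : MonotoneOn D (Set.Icc 0 t₀) := by
      apply monotoneOn_of_deriv_nonneg (convex_Icc 0 t₀)
      · exact fun x _ => (hdiff x).continuousAt.continuousWithinAt
      · exact fun x _ => (hdiff x).differentiableWithinAt
      · intro x hx
        rw [interior_Icc] at hx
        rw [(hasDerivAt_D x).deriv]
        exact div_nonneg (mul_nonneg (Real.exp_nonneg _) (num_nonneg hx.1.le hx.2.le))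
          (mul_pos (uu_pos x) (pow_pos (v_pos x) 2)).le
    have := mono (Set.mem_Icc.2 ⟨le_rfl, t₀_pos.le⟩) (Set.mem_Icc.2 ⟨ht, h⟩) ht
    linarith [D_zero]
  · have anti : AntitoneOn D (Set.Ici t₀) := by
      apply antitoneOn_of_deriv_nonpos (convex_Ici t₀)
      · exact fun x _ => (hdiff x).continuousAt.continuousWithinAt
      · exact fun x _ => (hdiff x).differentiableWithinAt
      · intro x hx
        rw [interior_Ici] at hx
        rw [(hasDerivAt_D x).deriv]
        apply div_nonpos_of_nonpos_of_nonneg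
        · exact mul_nonpos_of_nonneg_of_nonpos (Real.exp_nonneg _) (num_nonpos (le_of_lt hx))
        · exact (mul_pos (uu_pos x) (pow_pos (v_pos x) 2)).le
    exact le_of_tendsto tendsto_D_zero (eventually_atTop.2
      ⟨t, fun s hs => anti (Set.mem_Ici.2 h) (Set.mem_Ici.2 (h.trans hs)) hs⟩)

end ErfcAux

theorem erfc_upper_bound (t : ℝ) (ht : 0 ≤ t) :
    Real.sqrt π * Real.exp (t ^ 2) * erfc t
      ≤ 2 / (t + Real.sqrt (t ^ 2 + 4 / π)) := by
  have key : ErfcAux.R t ≤ ErfcAux.yy t := by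
    have := ErfcAux.D_nonneg ht
    simp only [ErfcAux.D] at this
    linarith
  have hπ : (0:ℝ) < Real.sqrt π := Real.sqrt_pos.2 Real.pi_pos
  have hv := ErfcAux.v_pos t
  have heq : Real.sqrt π * Real.exp (t ^ 2) * erfc t = 2 * Real.exp (t ^ 2) * ErfcAux.R t := by
    simp only [erfc, ErfcAux.R]
    field_simp
  rw [heq]
  have h2 : 2 * Real.exp (t ^ 2) * ErfcAux.R t ≤ 2 * Real.exp (t ^ 2) * ErfcAux.yy t :=
    mul_le_mul_of_nonneg_left key (by positivity)
  refine h2.trans (le_of_eq ?_)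
  have he : Real.exp (t ^ 2) * Real.exp (-t ^ 2) = 1 := by
    rw [← Real.exp_add]; simp
  simp only [ErfcAux.yy, ErfcAux.uu]
  rw [show 2 * Real.exp (t ^ 2) * (Real.exp (-t ^ 2) / (t + Real.sqrt (t ^ 2 + 4 / π)))
      = 2 * (Real.exp (t ^ 2) * Real.exp (-t ^ 2)) / (t + Real.sqrt (t ^ 2 + 4 / π)) by ring,
    he]
  norm_num
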